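/- arXiv:1310.6950 — 3 statements merged into one kernel-verified Lean document; each statement's English description precedes it below -/
import Mathlib

section
/- A real n×n matrix M is strictly J-sign-symmetric for some subset J ⊆ {1,…,n} if and only if M = D P D⁻¹ for some entrywise positive matrix P and some nonsingular diagonal matrix D. -/
open Matrix Polynomial Filter

variable {n : ℕ}

/-- The minor of `A` with row set `r` and column set `c` (taken in increasing order). -/
noncomputable def minor (A : Matrix (Fin n) (Fin n) ℝ) (r c : Finset (Fin n))
    (h : c.card = r.card) : ℝ :=
  (A.submatrix (fun i : Fin r.card => (r.orderIsoOfFin rfl i).1)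
      (fun i : Fin r.card => (c.orderIsoOfFin h i).1)).det

/-- The `j`-th compound matrix of `A`: the matrix of all `j × j` minors of `A`,
indexed by the `j`-element subsets of `Fin n` (ordered increasingly). -/
noncomputable def compound (A : Matrix (Fin n) (Fin n) ℝ) (j : ℕ) :
    Matrix {s : Finset (Fin n) // s.card = j} {s : Finset (Fin n) // s.card = j} ℝ :=
  Matrix.of fun r c =>
    (A.submatrix (fun i : Fin j => (r.1.orderIsoOfFin r.2 i).1)
      (fun i : Fin j => (c.1.orderIsoOfFin c.2 i).1)).det

/-- Characteristic polynomial of a real matrix, viewed over `ℂ`. -/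
noncomputable def charC {m : Type*} [Fintype m] [DecidableEq m] (A : Matrix m m ℝ) :
    Polynomial ℂ :=
  (A.map (Complex.ofReal)).charpoly

/-- `lam` is a positive simple strictly dominant eigenvalue of `A` with a strictly
positive eigenvector (the strong Perron–Frobenius property, with specified value). -/
def StrongPFAt {m : Type*} [Fintype m] [DecidableEq m] (A : Matrix m m ℝ) (lam : ℝ) : Prop :=
  0 < lam ∧ (charC A).IsRoot (lam : ℂ) ∧ (charC A).rootMultiplicity (lam : ℂ) = 1 ∧
    (∀ μ : ℂ, (charC A).IsRoot μ → μ ≠ (lam : ℂ) → ‖μ‖ < lam) ∧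
    ∃ v : m → ℝ, (∀ i, 0 < v i) ∧ A *ᵥ v = lam • v

/-- The strong Perron–Frobenius property. -/
def StrongPF {m : Type*} [Fintype m] [DecidableEq m] (A : Matrix m m ℝ) : Prop :=
  ∃ lam : ℝ, StrongPFAt A lam

/-- `M` is strictly `J`-sign-symmetric (for the given set `J`). -/
def SJSWith (J : Finset (Fin n)) (M : Matrix (Fin n) (Fin n) ℝ) : Prop :=
  ∀ i j : Fin n, ((i ∈ J ↔ j ∈ J) → 0 < M i j) ∧ (¬(i ∈ J ↔ j ∈ J) → M i j < 0)

/-- `M` is strictly J-sign-symmetric for some `J ⊆ {1,…,n}`. -/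
def SJS (M : Matrix (Fin n) (Fin n) ℝ) : Prop :=
  ∃ J : Finset (Fin n), SJSWith J M

/-- Eventually strictly J-sign-symmetric. -/
def ESJS (A : Matrix (Fin n) (Fin n) ℝ) : Prop :=
  ∃ k0 : ℕ, ∀ k ≥ k0, SJS (A ^ k)

/-- Eventually (entrywise) positive. -/
def EvPos {m : Type*} [Fintype m] [DecidableEq m] (A : Matrix m m ℝ) : Prop :=
  ∃ k0 : ℕ, ∀ k ≥ k0, ∀ i j, 0 < (A ^ k) i j

/-- Strictly totally positive: all minors of all orders are positive. -/
def STP (A : Matrix (Fin n) (Fin n) ℝ) : Prop :=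
  ∀ (r c : Finset (Fin n)) (h : c.card = r.card), r.Nonempty → 0 < minor A r c h

/-- Totally nonnegative: all minors of all orders are nonnegative. -/
def TotNonneg (A : Matrix (Fin n) (Fin n) ℝ) : Prop :=
  ∀ (r c : Finset (Fin n)) (h : c.card = r.card), 0 ≤ minor A r c h

/-- Eventually strictly totally positive. -/
def ESTP (A : Matrix (Fin n) (Fin n) ℝ) : Prop :=
  ∃ k0 : ℕ, ∀ k ≥ k0, STP (A ^ k)

/-- The checkerboard transform `S* = ((-1)^(i+j) s_ij)`. -/
def checker (S : Matrix (Fin n) (Fin n) ℝ) : Matrix (Fin n) (Fin n) ℝ :=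
  Matrix.of fun i j => (-1 : ℝ) ^ ((i : ℕ) + (j : ℕ)) * S i j

/-- The exterior product `x₀ ∧ ⋯ ∧ x_{j-1}` of the first `j` of the vectors `x`,
as a vector indexed by `j`-element subsets of `Fin n`. -/
noncomputable def wedge (x : Fin n → Fin n → ℝ) (j : ℕ) (hj : j ≤ n) :
    {s : Finset (Fin n) // s.card = j} → ℝ :=
  fun s => (Matrix.of fun a b : Fin j => x (Fin.castLE hj b) (s.1.orderIsoOfFin s.2 a).1).det

/-! Conjugation by the diagonal sign matrix `D_J = diag(±1)`, with `+1` exactly on `J`, flips the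
sign of the entries in the blocks `J × Jᶜ` and `Jᶜ × J`; as `D_J = D_J⁻¹`, a matrix is strictly
`J`-sign-symmetric iff `D_J M D_J` is positive. Conversely `D P D⁻¹` has entries `d_i p_ij / d_j`,
whose sign is that of `d_i d_j`, so it is strictly `J`-sign-symmetric for `J = {i | 0 < d_i}`. -/

theorem Matrix.diagonal_mul_mul_diagonal_apply {ι R : Type*} [Fintype ι] [DecidableEq ι]
    [NonUnitalNonAssocSemiring R] (d e : ι → R) (P : Matrix ι ι R) (i j : ι) :
    (diagonal d * P * diagonal e) i j = d i * P i j * e j := by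
  rw [mul_diagonal, diagonal_mul]

section SignVec

variable {ι : Type*} [DecidableEq ι]

def signVec (J : Finset ι) (i : ι) : ℝ :=
  if i ∈ J then 1 else -1

theorem signVec_mul_self (J : Finset ι) (i : ι) : signVec J i * signVec J i = 1 := by
  unfold signVec; split_ifs <;> norm_num

theorem signVec_ne_zero (J : Finset ι) (i : ι) : signVec J i ≠ 0 := by
  unfold signVec; split_ifs <;> norm_num

theorem signVec_filter_pos_mul [Fintype ι] (d : ι → ℝ) {i : ι} {x : ℝ} (hx : 0 < x ↔ 0 < d i) :
    signVec {k | 0 < d k} i * x = |x| := by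
  by_cases h : 0 < x
  · simp [signVec, ← hx, h, abs_of_pos h]
  · simp [signVec, ← hx, h, abs_of_nonpos (not_lt.1 h)]

end SignVec

theorem sjsWith_iff_pos_signVec_mul (J : Finset (Fin n)) (M : Matrix (Fin n) (Fin n) ℝ) :
    SJSWith J M ↔ ∀ i j, 0 < signVec J i * M i j * signVec J j := by
  refine forall_congr' fun i => forall_congr' fun j => ?_
  by_cases hi : i ∈ J <;> by_cases hj : j ∈ J <;> simp [signVec, hi, hj]

theorem diagonal_signVec_mul_mul_diagonal_inv (J : Finset (Fin n)) (M : Matrix (Fin n) (Fin n) ℝ) :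
    diagonal (signVec J) * of (fun i j => signVec J i * M i j * signVec J j) *
      diagonal (fun i => (signVec J i)⁻¹) = M := by
  ext i j
  rw [diagonal_mul_mul_diagonal_apply, of_apply, inv_eq_of_mul_eq_one_right (signVec_mul_self J j)]
  linear_combination
    M i j * (signVec J j * signVec J j * signVec_mul_self J i + signVec_mul_self J j)

theorem sjsWith_diagonal_mul_mul_diagonal_inv {d : Fin n → ℝ} {P : Matrix (Fin n) (Fin n) ℝ}
    (hd : ∀ i, d i ≠ 0) (hP : ∀ i j, 0 < P i j) :
    SJSWith {k | 0 < d k} (diagonal d * P * diagonal (fun i => (d i)⁻¹)) := by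
  refine (sjsWith_iff_pos_signVec_mul _ _).2 fun i j => ?_
  have hi := signVec_filter_pos_mul d (Iff.refl (0 < d i))
  have hj := signVec_filter_pos_mul d (inv_pos (a := d j))
  calc (0 : ℝ) < |d i| * P i j * |(d j)⁻¹| := by
        have := hP i j; have := hd i; have := hd j; positivity
    _ = _ := by rw [diagonal_mul_mul_diagonal_apply, ← hi, ← hj]; ring

/-- `M` is strictly J-sign-symmetric iff `M = D P D⁻¹` with `P` positive
and `D` a nonsingular diagonal matrix. -/
theorem stmt2 (M : Matrix (Fin n) (Fin n) ℝ) :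
    SJS M ↔ ∃ (d : Fin n → ℝ) (P : Matrix (Fin n) (Fin n) ℝ),
      (∀ i, d i ≠ 0) ∧ (∀ i j, 0 < P i j) ∧
        M = diagonal d * P * diagonal (fun i => (d i)⁻¹) := by
  constructor
  · rintro ⟨J, hJ⟩
    exact ⟨signVec J, _, signVec_ne_zero J, (sjsWith_iff_pos_signVec_mul J M).1 hJ,
      (diagonal_signVec_mul_mul_diagonal_inv J M).symm⟩
  · rintro ⟨d, P, hd, hP, rfl⟩
    exact ⟨_, sjsWith_diagonal_mul_mul_diagonal_inv hd hP⟩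
end

section
/- An oscillatory matrix is eventually strictly totally positive: if A is totally nonnegative and some power A^m is strictly totally positive, then there exists k₀ such that A^k is strictly totally positive for all k ≥ k₀. -/
open Matrix Polynomial Filter

variable {n : ℕ}

/-!
By Cauchy–Binet, every minor of `A * B` is the sum over column sets `s` of the products of the
`(r, s)` minor of `A` and the `(s, c)` minor of `B`. If `A` is totally nonnegative and
invertible, every row set `r` has some nonzero, hence positive, minor of `A`, so `A * B` is STP
whenever `B` is. Since `A ^ m` is STP, `A` is invertible, and inductively
`A ^ (m + j + 1) = A * A ^ (m + j)` is STP.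
-/

section CauchyBinet

variable {R : Type*} [CommRing R]

theorem Matrix.det_mul_eq_sum_prod_mul_det_submatrix {m ι : Type*} [Fintype m] [DecidableEq m]
    [Fintype ι] (A : Matrix m ι R) (B : Matrix ι m R) :
    (A * B).det = ∑ f : m → ι, (∏ i, A i (f i)) * (B.submatrix f id).det := by
  have hrows : A * B = Matrix.of fun i => ∑ k, A i k • B k := by
    ext i l
    simp [Matrix.mul_apply, Finset.sum_apply]
  rw [hrows]
  refine ((Matrix.detRowAlternating : (m → R) [⋀^m]→ₗ[R] R).toMultilinearMap.map_sum
    (fun i k => A i k • B k)).trans (Finset.sum_congr rfl fun f _ => ?_)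
  exact (MultilinearMap.map_smul_univ _ _ _).trans rfl

variable {ι : Type*} [LinearOrder ι] {j : ℕ}

def Finset.embeddingOfSubsetPerm (p : {s : Finset ι // s.card = j} × Equiv.Perm (Fin j)) :
    Fin j ↪ ι :=
  p.2.toEmbedding.trans (p.1.1.orderEmbOfFin p.1.2).toEmbedding

theorem Finset.coe_embeddingOfSubsetPerm
    (p : {s : Finset ι // s.card = j} × Equiv.Perm (Fin j)) :
    ⇑(Finset.embeddingOfSubsetPerm p) = p.1.1.orderEmbOfFin p.1.2 ∘ p.2 :=
  rfl

theorem Finset.embeddingOfSubsetPerm_bijective [Fintype ι] :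
    Function.Bijective (Finset.embeddingOfSubsetPerm (ι := ι) (j := j)) := by
  refine (Fintype.bijective_iff_injective_and_card _).2 ⟨?_, ?_⟩
  · rintro ⟨s, σ⟩ ⟨t, τ⟩ h
    have hst : s = t := by
      have := congrArg (fun e : Fin j ↪ ι => Set.range e) h
      simp only [Finset.coe_embeddingOfSubsetPerm, EquivLike.range_comp,
        Finset.range_orderEmbOfFin] at this
      exact Subtype.ext (Finset.coe_injective this)
    subst hst
    refine Prod.ext rfl (Equiv.ext fun i => ?_)
    exact (s.1.orderEmbOfFin s.2).injective (DFunLike.congr_fun h i)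
  · rw [Fintype.card_prod, Fintype.card_finset_len, Fintype.card_perm, Fintype.card_fin,
      Fintype.card_embedding_eq, Fintype.card_fin, Nat.descFactorial_eq_factorial_mul_choose,
      mul_comm]

theorem Fintype.sum_fun_eq_sum_embedding {α β M : Type*} [Fintype α] [DecidableEq α]
    [Fintype β] [AddCommMonoid M] (g : (α → β) → M)
    (hg : ∀ f, ¬ Function.Injective f → g f = 0) :
    ∑ f, g f = ∑ e : α ↪ β, g e := by
  let coeFn : (α ↪ β) ↪ (α → β) := ⟨(⇑), DFunLike.coe_injective⟩
  calc ∑ f, g f = ∑ f ∈ Finset.univ.map coeFn, g f :=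
        (Finset.sum_subset (Finset.subset_univ _) fun f _ hf =>
          hg f fun hinj => hf (Finset.mem_map.2 ⟨⟨f, hinj⟩, Finset.mem_univ _, rfl⟩)).symm
    _ = ∑ e : α ↪ β, g e := Finset.sum_map _ _ _

theorem Matrix.det_mul_eq_sum_det_submatrix_mul_det_submatrix [Fintype ι]
    (A : Matrix (Fin j) ι R) (B : Matrix ι (Fin j) R) :
    (A * B).det = ∑ s : {s : Finset ι // s.card = j},
      (A.submatrix id (s.1.orderEmbOfFin s.2)).det *
        (B.submatrix (s.1.orderEmbOfFin s.2) id).det := by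
  -- Non-injective `f` repeat a row of `B`; injective ones factor uniquely as
  -- (increasing enumeration of their image) ∘ (permutation).
  rw [Matrix.det_mul_eq_sum_prod_mul_det_submatrix, Fintype.sum_fun_eq_sum_embedding,
    ← Fintype.sum_bijective _ Finset.embeddingOfSubsetPerm_bijective _ _ fun _ => rfl,
    Fintype.sum_prod_type]
  · refine Finset.sum_congr rfl fun s _ => ?_
    rw [← Matrix.det_transpose (A.submatrix _ _), Matrix.det_apply', Finset.sum_mul]
    refine Finset.sum_congr rfl fun σ _ => ?_
    have hperm := Matrix.det_permute σ (B.submatrix (s.1.orderEmbOfFin s.2) id)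
    rw [mul_right_comm, ← hperm, mul_comm]
    rfl
  · intro f hf
    obtain ⟨a, b, hab, hne⟩ := Function.not_injective_iff.1 hf
    rw [Matrix.det_zero_of_row_eq hne (by ext; simp [hab]), mul_zero]

end CauchyBinet

section Minor

variable {n : ℕ}

theorem minor_eq_det_submatrix (A : Matrix (Fin n) (Fin n) ℝ) (r c : Finset (Fin n))
    (h : c.card = r.card) {k : ℕ} (hk : r.card = k) :
    minor A r c h = (A.submatrix (r.orderEmbOfFin hk) (c.orderEmbOfFin (h.trans hk))).det := by
  subst hk
  rfl

theorem minor_mul (A B : Matrix (Fin n) (Fin n) ℝ) (r c : Finset (Fin n)) (h : c.card = r.card) :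
    minor (A * B) r c h = ∑ s : {s : Finset (Fin n) // s.card = r.card},
      minor A r s.1 s.2 * minor B s.1 c (h.trans s.2.symm) := by
  rw [minor_eq_det_submatrix _ _ _ h rfl,
    Matrix.submatrix_mul _ _ _ _ _ Function.bijective_id,
    Matrix.det_mul_eq_sum_det_submatrix_mul_det_submatrix]
  refine Finset.sum_congr rfl fun s _ => ?_
  rw [minor_eq_det_submatrix B s.1 c _ s.2]
  rfl

theorem minor_one (r : Finset (Fin n)) : minor (1 : Matrix (Fin n) (Fin n) ℝ) r r rfl = 1 := by
  rw [minor_eq_det_submatrix _ _ _ rfl rfl,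
    Matrix.submatrix_one _ (r.orderEmbOfFin rfl).injective, Matrix.det_one]

theorem minor_univ (A : Matrix (Fin n) (Fin n) ℝ) : minor A Finset.univ Finset.univ rfl = A.det :=
  Matrix.det_submatrix_equiv_self ((Finset.univ.orderIsoOfFin rfl).toEquiv.trans
    (Equiv.subtypeUnivEquiv Finset.mem_univ)) A

theorem exists_minor_ne_zero {A : Matrix (Fin n) (Fin n) ℝ} (hA : A.det ≠ 0)
    (r : Finset (Fin n)) :
    ∃ s : {s : Finset (Fin n) // s.card = r.card}, minor A r s.1 s.2 ≠ 0 := by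
  by_contra! hzero
  have h := minor_mul A A⁻¹ r r rfl
  rw [Matrix.mul_nonsing_inv A hA.isUnit, minor_one] at h
  simp [hzero] at h

theorem STP.det_pos {A : Matrix (Fin n) (Fin n) ℝ} (hA : STP A) : 0 < A.det := by
  rcases isEmpty_or_nonempty (Fin n) with _ | _
  · simp [Matrix.det_isEmpty]
  · simpa [minor_univ] using hA Finset.univ Finset.univ rfl Finset.univ_nonempty

theorem TotNonneg.stp_mul {A B : Matrix (Fin n) (Fin n) ℝ} (hA : TotNonneg A) (hdet : A.det ≠ 0)
    (hB : STP B) : STP (A * B) := by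
  intro r c h hr
  obtain ⟨s₀, hs₀⟩ := exists_minor_ne_zero hdet r
  have hne (s : {s : Finset (Fin n) // s.card = r.card}) : s.1.Nonempty := by
    rw [← Finset.card_pos, s.2]
    exact hr.card_pos
  rw [minor_mul]
  exact Finset.sum_pos' (fun s _ => mul_nonneg (hA _ _ _) (hB _ _ _ (hne s)).le)
    ⟨s₀, Finset.mem_univ _, mul_pos ((hA _ _ _).lt_of_ne' hs₀) (hB _ _ _ (hne s₀))⟩

end Minor

/-- an oscillatory matrix is eventually strictly totally positive. -/
theorem stmt12 (A : Matrix (Fin n) (Fin n) ℝ) (m : ℕ) (hm : 0 < m)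
    (hTN : TotNonneg A) (hSTP : STP (A ^ m)) :
    ∃ k0 : ℕ, ∀ k ≥ k0, STP (A ^ k) := by
  have hdet : A.det ≠ 0 := fun h0 => by
    simpa [Matrix.det_pow, h0, hm.ne'] using hSTP.det_pos
  refine ⟨m, fun k hk => ?_⟩
  obtain ⟨j, rfl⟩ := Nat.exists_eq_add_of_le hk
  induction j with
  | zero => exact hSTP
  | succ j ih =>
    rw [← add_assoc, pow_succ']
    exact hTN.stp_mul hdet (ih (Nat.le_add_right m j))
end

section
/- If an invertible n×n matrix S and its inverse S⁻¹ are both totally nonnegative (all minors ≥ 0), then S is a positive diagonal matrix. -/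
open Matrix Polynomial Filter

variable {n : ℕ}

/-!
Since `S` and `S⁻¹` are entrywise nonnegative, no cancellation can occur in the off-diagonal
entries of `S * S⁻¹ = 1` and `S⁻¹ * S = 1`; hence each row of `S` has exactly one nonzero entry,
in column `σ i` for an injective `σ`. If `σ` inverted some pair `i < i'`, the `2 × 2` minor of
`S` on rows `{i, i'}` and columns `{σ i', σ i}` would be `-S i (σ i) * S i' (σ i') < 0`. So `σ` is
strictly monotone, hence the identity.
-/

namespace Finset

variable {α : Type*} [LinearOrder α]

theorem orderEmbOfFin_singleton_apply (a : α) {k : ℕ} (h : ({a} : Finset α).card = k)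
    (i : Fin k) : ({a} : Finset α).orderEmbOfFin h i = a :=
  mem_singleton.mp (orderEmbOfFin_mem _ _ _)

theorem orderEmbOfFin_pair_apply {a b : α} (hab : a < b) {k : ℕ}
    (h : ({a, b} : Finset α).card = k) (i : Fin k) :
    ({a, b} : Finset α).orderEmbOfFin h i =
      ![a, b] (Fin.cast (h.symm.trans (card_pair hab.ne)) i) := by
  have hpair : ({a, b} : Finset α).orderEmbOfFin (card_pair hab.ne) = ![a, b] :=
    (orderEmbOfFin_unique _ (by simp [Fin.forall_fin_two])
      (Fin.strictMono_iff_lt_succ.mpr (by simp [Fin.forall_fin_one, hab]))).symm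
  rw [← hpair, orderEmbOfFin_eq_orderEmbOfFin_iff, Fin.val_cast]

end Finset

namespace Matrix

variable {m R : Type*} [Fintype m] [DecidableEq m] [Semiring R] [PartialOrder R]
  [IsOrderedRing R] {A B : Matrix m m R}

theorem apply_mul_apply_eq_zero_of_nonneg_of_mul_eq_one (hA : ∀ i j, 0 ≤ A i j)
    (hB : ∀ i j, 0 ≤ B i j) (hAB : A * B = 1) {i j : m} (hij : i ≠ j) (k : m) :
    A i k * B k j = 0 := by
  have hsum : ∑ l, A i l * B l j = 0 := by
    simpa [mul_apply, one_apply_ne hij] using congr_fun₂ hAB i j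
  exact (Finset.sum_eq_zero_iff_of_nonneg fun l _ => mul_nonneg (hA i l) (hB l j)).mp hsum k
    (Finset.mem_univ k)

variable [NoZeroDivisors R] [Nontrivial R]

theorem exists_single_support_of_nonneg_of_mul_eq_one (hA : ∀ i j, 0 ≤ A i j)
    (hB : ∀ i j, 0 ≤ B i j) (hAB : A * B = 1) (hBA : B * A = 1) (i : m) :
    ∃ k, 0 < A i k ∧ B k i ≠ 0 ∧ (∀ l, l ≠ k → A i l = 0) ∧ ∀ j, j ≠ i → B k j = 0 := by
  obtain ⟨k, -, hk⟩ : ∃ k ∈ Finset.univ, A i k * B k i ≠ 0 :=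
    Finset.exists_ne_zero_of_sum_ne_zero <| by
      rw [← mul_apply, hAB, one_apply_eq]
      exact one_ne_zero
  have hAik : A i k ≠ 0 := left_ne_zero_of_mul hk
  have hBki : B k i ≠ 0 := right_ne_zero_of_mul hk
  refine ⟨k, (hA i k).lt_of_ne' hAik, hBki, fun l hl => ?_, fun j hj => ?_⟩
  · exact (mul_eq_zero.mp (apply_mul_apply_eq_zero_of_nonneg_of_mul_eq_one hB hA hBA
      (Ne.symm hl) i)).resolve_left hBki
  · exact (mul_eq_zero.mp (apply_mul_apply_eq_zero_of_nonneg_of_mul_eq_one hA hB hAB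
      (Ne.symm hj) k)).resolve_left hAik

theorem exists_injective_support_of_nonneg_of_mul_eq_one (hA : ∀ i j, 0 ≤ A i j)
    (hB : ∀ i j, 0 ≤ B i j) (hAB : A * B = 1) (hBA : B * A = 1) :
    ∃ σ : m → m, Function.Injective σ ∧ (∀ i, 0 < A i (σ i)) ∧
      ∀ i j, j ≠ σ i → A i j = 0 := by
  choose σ hpos hBne hrow hcol using exists_single_support_of_nonneg_of_mul_eq_one hA hB hAB hBA
  refine ⟨σ, fun i i' hσ => ?_, hpos, hrow⟩
  by_contra hne
  exact hBne i' (hσ ▸ hcol i i' (Ne.symm hne))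

end Matrix

theorem minor_singleton (A : Matrix (Fin n) (Fin n) ℝ) (i j : Fin n)
    (h : ({j} : Finset (Fin n)).card = ({i} : Finset (Fin n)).card) :
    minor A {i} {j} h = A i j := by
  unfold minor
  rw [← det_submatrix_equiv_self (finCongr (Finset.card_singleton i)).symm, det_fin_one]
  simp [Finset.orderEmbOfFin_singleton_apply]

theorem minor_pair (A : Matrix (Fin n) (Fin n) ℝ) {a b c d : Fin n} (hab : a < b) (hcd : c < d)
    (h : ({c, d} : Finset (Fin n)).card = ({a, b} : Finset (Fin n)).card) :
    minor A {a, b} {c, d} h = A a c * A b d - A a d * A b c := by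
  unfold minor
  rw [← det_submatrix_equiv_self (finCongr (Finset.card_pair hab.ne)).symm, det_fin_two]
  simp [Finset.orderEmbOfFin_pair_apply hab, Finset.orderEmbOfFin_pair_apply hcd]

namespace TotNonneg

variable {A : Matrix (Fin n) (Fin n) ℝ}

theorem apply_nonneg (hA : TotNonneg A) (i j : Fin n) : 0 ≤ A i j :=
  minor_singleton A i j rfl ▸ hA {i} {j} rfl

theorem strictMono_of_support (hA : TotNonneg A) {σ : Fin n → Fin n}
    (hσ : Function.Injective σ) (hpos : ∀ i, 0 < A i (σ i))
    (hzero : ∀ i j, j ≠ σ i → A i j = 0) : StrictMono σ := by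
  intro i i' hii'
  refine lt_of_le_of_ne (not_lt.mp fun hinv => ?_) (hσ.ne hii'.ne)
  have hminor := hA {i, i'} {σ i', σ i}
    (by rw [Finset.card_pair hinv.ne, Finset.card_pair hii'.ne])
  rw [minor_pair A hii' hinv, hzero i (σ i') (hσ.ne hii'.ne'),
    hzero i' (σ i) (hσ.ne hii'.ne)] at hminor
  linarith [mul_pos (hpos i) (hpos i')]

end TotNonneg

/-- if `S` and `S⁻¹` are both totally nonnegative then `S` is a
positive diagonal matrix. -/
theorem stmt15 (S : Matrix (Fin n) (Fin n) ℝ) (hS : IsUnit S.det)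
    (h1 : TotNonneg S) (h2 : TotNonneg S⁻¹) :
    ∃ d : Fin n → ℝ, (∀ i, 0 < d i) ∧ S = diagonal d := by
  obtain ⟨σ, hσ, hpos, hzero⟩ := exists_injective_support_of_nonneg_of_mul_eq_one
    h1.apply_nonneg h2.apply_nonneg (S.mul_nonsing_inv hS) (S.nonsing_inv_mul hS)
  have hid : ∀ i, σ i = i := fun i => (h1.strictMono_of_support hσ hpos hzero).apply_eq
  refine ⟨fun i => S i i, fun i => by simpa only [hid] using hpos i, ?_⟩
  ext i j
  rw [diagonal_apply]
  split_ifs with hij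
  · rw [hij]
  · exact hzero i j (by rw [hid]; exact Ne.symm hij)
end
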